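/- Let H = {0,...,q−2}^r ⊂ Z^r and U ⊆ H. The dual code of the toric code C = π_T(F_q[U]) (evaluation at all of (F_q*)^r) is the toric code π_T(F_q[−H \ −U]), i.e. the evaluation code of the span of monomials whose (negated, mod q−1 reduced) exponents do not lie in U. -/

import Mathlib

open MvPolynomial

/-- Evaluation of a polynomial in `r` variables at all points of the torus `(Fˣ)^r`. -/
noncomputable def torusEvalR (F : Type*) [Field F] (r : ℕ) :
    MvPolynomial (Fin r) F →ₗ[F] ((Fin r → Fˣ) → F) :=
  LinearMap.pi fun t : Fin r → Fˣ =>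
    (MvPolynomial.aeval fun i : Fin r => (t i : F)).toLinearMap

/-- The toric code associated to a set `U` of exponent vectors. -/
noncomputable def toricCodeR (F : Type*) [Field F] (r : ℕ) (U : Set (Fin r → ℕ)) :
    Submodule F ((Fin r → Fˣ) → F) :=
  Submodule.map (torusEvalR F r)
    (Submodule.span F {m : MvPolynomial (Fin r) F | ∃ u ∈ U, m = ∏ i, X i ^ u i})

/-- Reduction modulo `q−1` of the negative of an exponent vector in `{0,…,q−2}^r`. -/
def negExp (q r : ℕ) (w : Fin r → ℕ) : Fin r → ℕ := fun i => (q - 1 - w i) % (q - 1)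

/-!
The monomials `χ_u : t ↦ ∏ tᵢ ^ uᵢ`, `u ∈ H`, are the characters of the group `(F_q^*)^r`, and the
character sums `∑_{x ∈ F_q^*} x ^ k = -[q - 1 ∣ k]` give the orthogonality relation
`χ_u ⬝ᵥ χ_w = (-1)^r` if `u + w ≡ 0 (mod q - 1)` and `0` otherwise. Hence the toric code of the
complement of `-U` is orthogonal to that of `U`. Conversely, Fourier inversion
`y = (-1)^r • ∑_{w ∈ H} (χ_{-w} ⬝ᵥ y) • χ_w` writes any `y` orthogonal to the code of `U` as a
combination of the `χ_w` with `-w ∉ U`.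
-/

open Finset

theorem Nat.sub_mod_eq_of_dvd_add {n u w : ℕ} (hu : u < n) (hw : w < n) (h : n ∣ u + w) :
    (n - w) % n = u := by
  obtain ⟨k, hk⟩ := h
  rcases k with _ | _ | k
  · obtain ⟨rfl, rfl⟩ : u = 0 ∧ w = 0 := by omega
    simp
  · rw [Nat.mod_eq_of_lt (by omega)]
    omega
  · nlinarith

theorem pow_sub_mod_eq_inv_pow {G : Type*} [Group G] {g : G} {n a : ℕ} (hg : g ^ n = 1)
    (ha : a ≤ n) : g ^ ((n - a) % n) = g⁻¹ ^ a := by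
  rw [← pow_eq_pow_mod _ hg, pow_sub _ ha, hg, one_mul, inv_pow]

theorem dotProduct_eq_zero_of_mem_span {ι R : Type*} [Fintype ι] [CommSemiring R]
    {S T : Set (ι → R)} (h : ∀ a ∈ S, ∀ b ∈ T, a ⬝ᵥ b = 0) {x y : ι → R}
    (hx : x ∈ Submodule.span R S) (hy : y ∈ Submodule.span R T) : x ⬝ᵥ y = 0 := by
  induction hx using Submodule.span_induction with
  | mem a ha =>
    induction hy using Submodule.span_induction with
    | mem b hb => exact h a ha b hb
    | zero => exact dotProduct_zero a
    | add b c _ _ hb hc => rw [dotProduct_add, hb, hc, add_zero]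
    | smul c b _ hb => rw [dotProduct_smul, hb, smul_zero]
  | zero => exact zero_dotProduct y
  | add a b _ _ ha hb => rw [add_dotProduct, ha, hb, add_zero]
  | smul c a _ ha => rw [smul_dotProduct, ha, smul_zero]

def torusMonomial (F : Type*) [Field F] {r : ℕ} (u : Fin r → ℕ) : (Fin r → Fˣ) → F :=
  fun t => ∏ i, (t i : F) ^ u i

section Torus

variable {F : Type*} [Field F] {r : ℕ}

theorem torusEvalR_prod_X_pow (u : Fin r → ℕ) :
    torusEvalR F r (∏ i, X i ^ u i) = torusMonomial F u := by
  funext t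
  simp [torusEvalR, torusMonomial]

theorem toricCodeR_eq_span (U : Set (Fin r → ℕ)) :
    toricCodeR F r U = Submodule.span F (torusMonomial F '' U) := by
  have hmon : {m : MvPolynomial (Fin r) F | ∃ u ∈ U, m = ∏ i, X i ^ u i} =
      (fun u => ∏ i, X i ^ u i) '' U := by
    ext
    simp [eq_comm]
  simp only [toricCodeR, Submodule.map_span, hmon, Set.image_image, torusEvalR_prod_X_pow]

variable [Fintype F]

local notation "q" => Fintype.card F

theorem units_pow_card_sub_one (s : Fˣ) : s ^ (q - 1) = 1 := by
  ext
  push_cast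
  exact FiniteField.pow_card_sub_one_eq_one _ s.ne_zero

theorem torusMonomial_negExp {w : Fin r → ℕ} (hw : ∀ i, w i < q - 1) (s : Fin r → Fˣ) :
    torusMonomial F (negExp q r w) s = torusMonomial F w s⁻¹ := by
  refine prod_congr rfl fun i _ => ?_
  rw [negExp, ← Units.val_pow_eq_pow_val,
    pow_sub_mod_eq_inv_pow (units_pow_card_sub_one (s i)) (hw i).le]
  rfl

variable [DecidableEq F]

theorem torusMonomial_dotProduct (u w : Fin r → ℕ) :
    torusMonomial F u ⬝ᵥ torusMonomial F w =
      ∏ i, if q - 1 ∣ u i + w i then (-1 : F) else 0 := by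
  simp only [← FiniteField.sum_pow_units, Fintype.prod_sum, dotProduct, torusMonomial,
    ← prod_mul_distrib, pow_add]

theorem torusMonomial_dotProduct_eq_zero {u w : Fin r → ℕ} (hu : ∀ i, u i < q - 1)
    (hw : ∀ i, w i < q - 1) (h : negExp q r w ≠ u) :
    torusMonomial F u ⬝ᵥ torusMonomial F w = 0 := by
  obtain ⟨i, hi⟩ : ∃ i, ¬ q - 1 ∣ u i + w i := by
    by_contra! hdvd
    exact h (funext fun i => Nat.sub_mod_eq_of_dvd_add (hu i) (hw i) (hdvd i))
  rw [torusMonomial_dotProduct]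
  exact prod_eq_zero (mem_univ i) (if_neg hi)

theorem sum_range_pow_units (x : Fˣ) :
    ∑ a ∈ range (q - 1), (x : F) ^ a = if x = 1 then -1 else 0 := by
  split_ifs with hx
  · simp [hx, Nat.cast_sub Fintype.card_pos]
  · rw [geom_sum_eq (by simpa [Units.val_eq_one] using hx),
      FiniteField.pow_card_sub_one_eq_one _ x.ne_zero, sub_self, zero_div]

theorem sum_torusMonomial_inv_mul (s t : Fin r → Fˣ) :
    ∑ w ∈ Fintype.piFinset (fun _ => range (q - 1)), torusMonomial F w s⁻¹ * torusMonomial F w t =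
      if s = t then (-1) ^ r else 0 := by
  have hmul : ∀ w : Fin r → ℕ, torusMonomial F w s⁻¹ * torusMonomial F w t =
      ∏ i, (((s i)⁻¹ * t i : Fˣ) : F) ^ w i := by
    intro w
    simp [torusMonomial, mul_pow, prod_mul_distrib, prod_inv_distrib]
  simp_rw [hmul, ← prod_univ_sum, sum_range_pow_units, inv_mul_eq_one, prod_ite_zero]
  simp only [mem_univ, forall_const, ← _root_.funext_iff, prod_const, card_univ, Fintype.card_fin]

theorem eq_neg_one_pow_smul_sum_dotProduct_smul_torusMonomial (y : (Fin r → Fˣ) → F) :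
    y = (-1 : F) ^ r • ∑ w ∈ Fintype.piFinset (fun _ => range (q - 1)),
      (torusMonomial F (negExp q r w) ⬝ᵥ y) • torusMonomial F w := by
  funext t
  calc y t = (-1) ^ r * ∑ s, y s * (if s = t then (-1) ^ r else 0) := by
        simp only [mul_ite, mul_zero, sum_ite_eq', mem_univ, if_true]
        rw [mul_left_comm, ← mul_pow, neg_one_mul, neg_neg, one_pow, mul_one]
    _ = (-1) ^ r * ∑ s, y s * ∑ w ∈ Fintype.piFinset (fun _ => range (q - 1)),
          torusMonomial F w s⁻¹ * torusMonomial F w t := by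
        simp_rw [sum_torusMonomial_inv_mul]
    _ = _ := by
        simp only [Pi.smul_apply, Finset.sum_apply, smul_eq_mul, dotProduct, sum_mul, mul_sum]
        rw [sum_comm]
        refine sum_congr rfl fun w hw => sum_congr rfl fun s _ => ?_
        rw [torusMonomial_negExp (by simpa using hw)]
        ring

end Torus

theorem toric_dual_code_general (F : Type*) [Field F] [Fintype F] [DecidableEq F]
    (r : ℕ) (U : Set (Fin r → ℕ))
    (hU : ∀ u ∈ U, ∀ i, u i ≤ Fintype.card F - 2) :
    {y : (Fin r → Fˣ) → F | ∀ x ∈ toricCodeR F r U, ∑ t : Fin r → Fˣ, x t * y t = 0} =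
      ↑(toricCodeR F r
        {w : Fin r → ℕ | (∀ i, w i ≤ Fintype.card F - 2) ∧
          negExp (Fintype.card F) r w ∉ U}) := by
  have hq : 1 < Fintype.card F := Fintype.one_lt_card
  ext y
  simp only [Set.mem_ofPred_eq, SetLike.mem_coe, toricCodeR_eq_span]
  change (∀ x ∈ _, x ⬝ᵥ y = 0) ↔ _
  constructor
  · intro hy
    rw [eq_neg_one_pow_smul_sum_dotProduct_smul_torusMonomial y]
    refine Submodule.smul_mem _ _ (Submodule.sum_mem _ fun w hw => ?_)
    have hwH : ∀ i, w i < Fintype.card F - 1 := by simpa using hw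
    by_cases hwU : negExp (Fintype.card F) r w ∈ U
    · rw [hy _ (Submodule.subset_span ⟨_, hwU, rfl⟩), zero_smul]
      exact zero_mem _
    · exact Submodule.smul_mem _ _
        (Submodule.subset_span ⟨w, ⟨fun i => by have := hwH i; omega, hwU⟩, rfl⟩)
  · intro hy x hx
    refine dotProduct_eq_zero_of_mem_span ?_ hx hy
    rintro _ ⟨u, hu, rfl⟩ _ ⟨w, ⟨hwH, hwU⟩, rfl⟩
    refine torusMonomial_dotProduct_eq_zero (fun i => ?_) (fun i => ?_) fun h => hwU (h ▸ hu)
    · have := hU u hu i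
      omega
    · have := hwH i
      omega

/-- Let `H = {0,…,q−2}^r` and `U ⊆ H`.  The dual code of the toric code of `U` is
the toric code of `−H \ −U` (reduced modulo `q−1`). -/
theorem toric_dual_code (F : Type*) [Field F] [Fintype F] [DecidableEq F]
    (r : ℕ) (hr : 1 ≤ r) (U : Set (Fin r → ℕ))
    (hU : ∀ u ∈ U, ∀ i, u i ≤ Fintype.card F - 2) :
    {y : (Fin r → Fˣ) → F | ∀ x ∈ toricCodeR F r U, ∑ t : Fin r → Fˣ, x t * y t = 0} =
      ↑(toricCodeR F r
        {w : Fin r → ℕ | (∀ i, w i ≤ Fintype.card F - 2) ∧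
          negExp (Fintype.card F) r w ∉ U}) :=
  toric_dual_code_general F r U hU
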